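/- The permutations that can be obtained in at most p steps in the whole genome duplication - random loss model are exactly those whose number of descents is at most 2^p − 1: a permutation σ of size n is obtainable from the identity 1 2 ... n in at most p duplication-loss steps if and only if desc(σ) ≤ 2^p − 1. -/

import Mathlib

/-- `σ` has a descent at (0-based) position `i`, i.e. `σ i > σ (i+1)`. -/
def IsDescentAt {n : ℕ} (σ : Equiv.Perm (Fin n)) (i : ℕ) : Prop :=
  ∃ h : i + 1 < n, σ ⟨i + 1, h⟩ < σ ⟨i, Nat.lt_of_succ_lt h⟩

/-- The number of descents of `σ`. -/
noncomputable def descNum {n : ℕ} (σ : Equiv.Perm (Fin n)) : ℕ :=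
  {i : ℕ | IsDescentAt σ i}.ncard

/-- One step of the whole genome duplication - random loss model. -/
def DLStep {n : ℕ} (σ σ' : Equiv.Perm (Fin n)) : Prop :=
  ∃ (m : ℕ) (τ : Equiv.Perm (Fin n)),
    (∀ i j : Fin n, (i : ℕ) < m → (j : ℕ) < m → i < j → τ i < τ j) ∧
    (∀ i j : Fin n, m ≤ (i : ℕ) → m ≤ (j : ℕ) → i < j → τ i < τ j) ∧
    ∀ i, σ' i = σ (τ i)

/-- `σ` is obtainable from the identity permutation in at most `p` duplication-loss steps. -/
def ObtainableIn {n : ℕ} (p : ℕ) (σ : Equiv.Perm (Fin n)) : Prop :=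
  ∃ (q : ℕ) (c : ℕ → Equiv.Perm (Fin n)), q ≤ p ∧ c 0 = 1 ∧ c q = σ ∧
    ∀ i, i < q → DLStep (c i) (c (i + 1))

/-!
A permutation has at most `d` descents iff its positions split into at most `d + 1`
consecutive ascending runs. A step `σ ↦ σ ∘ τ` reads `σ` along two increasing sequences of
positions, each of which meets every run of `σ` in an ascending run of the result, so the number
of runs at most doubles. Conversely, a permutation with `2k` runs arises in one step from one with
`k` runs: sort the positions of runs `j` and `j + k` together by value, for each `j < k`.
-/

open Equiv

variable {n : ℕ} {σ : Perm (Fin n)}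

lemma finite_setOf_isDescentAt (σ : Perm (Fin n)) : {i | IsDescentAt σ i}.Finite :=
  (Set.finite_Iio n).subset fun _ ⟨h, _⟩ => by simp only [Set.mem_Iio]; omega

lemma lt_succ_of_not_isDescentAt {i : ℕ} (hi : i + 1 < n) (h : ¬IsDescentAt σ i) :
    σ ⟨i, Nat.lt_of_succ_lt hi⟩ < σ ⟨i + 1, hi⟩ :=
  lt_of_le_of_ne (not_lt.mp fun hlt => h ⟨hi, hlt⟩)
    (σ.injective.ne (by simp [Fin.ext_iff]))

lemma lt_of_forall_not_isDescentAt {i j : Fin n} (hij : i < j)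
    (h : ∀ k, (i : ℕ) ≤ k → k < j → ¬IsDescentAt σ k) : σ i < σ j := by
  obtain ⟨i, hi⟩ := i
  obtain ⟨j, hj⟩ := j
  simp only [Fin.mk_lt_mk] at hij h ⊢
  induction j, hij using Nat.le_induction with
  | base => exact lt_succ_of_not_isDescentAt hj (h i le_rfl i.lt_succ_self)
  | succ j hij ih =>
    exact (ih (by omega) fun k hk hkj => h k hk (by omega)).trans
      (lt_succ_of_not_isDescentAt hj (h j (by omega) j.lt_succ_self))

/-- `c i` is the index of an ascending run of `σ` containing position `i`; the runs come in
order and there are at most `d + 1` of them. -/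
structure IsRunLabeling (σ : Perm (Fin n)) (d : ℕ) (c : Fin n → ℕ) : Prop where
  monotone : Monotone c
  le : ∀ i, c i ≤ d
  lt_of_eq : ∀ ⦃i j⦄, i < j → c i = c j → σ i < σ j

lemma IsRunLabeling.lt_of_isDescentAt {d : ℕ} {c : Fin n → ℕ} (hc : IsRunLabeling σ d c)
    {i : ℕ} (hi : i + 1 < n) (h : σ ⟨i + 1, hi⟩ < σ ⟨i, Nat.lt_of_succ_lt hi⟩) :
    c ⟨i, Nat.lt_of_succ_lt hi⟩ < c ⟨i + 1, hi⟩ :=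
  lt_of_le_of_ne (hc.monotone (by simp [Fin.le_def]))
    fun heq => (hc.lt_of_eq (by simp [Fin.lt_def]) heq).asymm h

lemma IsRunLabeling.descNum_le {d : ℕ} {c : Fin n → ℕ} (hc : IsRunLabeling σ d c) :
    descNum σ ≤ d := by
  let c' : ℕ → ℕ := fun i => if h : i < n then c ⟨i, h⟩ else 0
  have hc' : ∀ {i} (h : IsDescentAt σ i), c' i < c' (i + 1) := fun ⟨hi, hlt⟩ => by
    simpa [c', hi, Nat.lt_of_succ_lt hi] using hc.lt_of_isDescentAt hi hlt
  have hmono : ∀ {i j}, i ≤ j → j < n → c' i ≤ c' j := fun hij hj => by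
    simpa [c', hj, hij.trans_lt hj] using hc.monotone (Fin.mk_le_mk.mpr hij)
  have hstrict : StrictMonoOn c' {i | IsDescentAt σ i} := fun i hi j hj hij =>
    (hc' hi).trans_le (hmono hij (Nat.lt_of_succ_lt hj.1))
  calc descNum σ ≤ (Set.Iio d).ncard :=
        Set.ncard_le_ncard_of_injOn c' (fun i hi => (hc' hi).trans_le (by
          simpa [c', hi.1] using hc.le _)) hstrict.injOn
    _ = d := Set.ncard_Iio_nat d

lemma exists_isRunLabeling (σ : Perm (Fin n)) : ∃ c, IsRunLabeling σ (descNum σ) c := by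
  let D := {i | IsDescentAt σ i}
  have hD : D.Finite := finite_setOf_isDescentAt σ
  refine ⟨fun i => (D ∩ Set.Iio i).ncard, ⟨fun i j hij => ?_, fun i => ?_, fun i j hij heq => ?_⟩⟩
  · exact Set.ncard_le_ncard (Set.inter_subset_inter_right _ (Set.Iio_subset_Iio hij))
      (hD.inter_of_left _)
  · exact Set.ncard_le_ncard Set.inter_subset_left hD
  · refine lt_of_forall_not_isDescentAt hij fun k hik hkj hk => (Set.ncard_lt_ncard ?_
      (hD.inter_of_left _)).ne heq
    refine Set.ssubset_iff_of_subset (Set.inter_subset_inter_right _ (Set.Iio_subset_Iio ?_)) |>.mpr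
      ⟨k, ⟨hk, hkj⟩, fun h => absurd h.2 (not_lt.mpr hik)⟩
    exact_mod_cast hij.le

lemma descNum_le_iff_exists_isRunLabeling {d : ℕ} :
    descNum σ ≤ d ↔ ∃ c, IsRunLabeling σ d c := by
  refine ⟨fun h => ?_, fun ⟨c, hc⟩ => hc.descNum_le⟩
  obtain ⟨c, hc⟩ := exists_isRunLabeling σ
  exact ⟨c, hc.monotone, fun i => (hc.le i).trans h, hc.lt_of_eq⟩

lemma Fin.exists_iff_val_lt_of_antitone {P : Fin n → Prop} (hP : Antitone P) :
    ∃ m : ℕ, ∀ i, P i ↔ (i : ℕ) < m := by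
  by_cases h : ∃ i, ¬P i
  · obtain ⟨i₀, hi₀, hmin⟩ := wellFounded_lt.has_min {i | ¬P i} h
    refine ⟨i₀, fun i => ⟨fun hi => ?_, fun hi => ?_⟩⟩
    · by_contra hle
      exact hi₀ (hP (Fin.not_lt.mp hle) hi)
    · by_contra hPi
      exact hmin i hPi hi
  · simp only [not_exists, not_not] at h
    exact ⟨n, fun i => ⟨fun _ => i.isLt, fun _ => h i⟩⟩

lemma descNum_eq_zero_iff : descNum σ = 0 ↔ σ = 1 := by
  rw [← Nat.le_zero, descNum_le_iff_exists_isRunLabeling]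
  constructor
  · rintro ⟨c, hc⟩
    have hσ : StrictMono σ := fun i j hij => hc.lt_of_eq hij (by simp [Nat.le_zero.mp (hc.le _)])
    ext i
    simp [congrFun hσ.eq_id i]
  · rintro rfl
    exact ⟨0, monotone_const, fun _ => le_rfl, fun _ _ h _ => h⟩

lemma descNum_le_of_dlStep {σ' : Perm (Fin n)} {d : ℕ} (hσ : descNum σ ≤ d)
    (h : DLStep σ σ') : descNum σ' ≤ 2 * d + 1 := by
  obtain ⟨c, hc⟩ := descNum_le_iff_exists_isRunLabeling.mp hσ
  obtain ⟨m, τ, hlow, hhigh, hσ'⟩ := h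
  have hτ : ∀ i j : Fin n, i < j → (m ≤ (i : ℕ) ↔ m ≤ (j : ℕ)) → τ i < τ j := fun i j hij hb => by
    by_cases hi : m ≤ (i : ℕ)
    · exact hhigh i j hi (hb.mp hi) hij
    · exact hlow i j (by omega) (by omega) hij
  refine descNum_le_iff_exists_isRunLabeling.mpr
    ⟨fun i => c (τ i) + if m ≤ (i : ℕ) then d + 1 else 0, ⟨fun i j hij => ?_, fun i => ?_, ?_⟩⟩
  · have hci := hc.le (τ i)
    rcases hij.lt_or_eq with hij | rfl
    · have hij' : (i : ℕ) < j := hij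
      by_cases hb : m ≤ (i : ℕ) ↔ m ≤ (j : ℕ)
      · have := hc.monotone (hτ i j hij hb).le
        split_ifs <;> omega
      · split_ifs <;> omega
    · exact le_rfl
  · have := hc.le (τ i)
    split_ifs <;> omega
  · intro i j hij heq
    have hci := hc.le (τ i)
    have hcj := hc.le (τ j)
    have hij' : (i : ℕ) < j := hij
    have hb : m ≤ (i : ℕ) ↔ m ≤ (j : ℕ) := by split_ifs at heq <;> omega
    rw [hσ', hσ']
    exact hc.lt_of_eq (hτ i j hij hb) (by split_ifs at heq <;> omega)

lemma exists_dlStep_of_descNum_le {d : ℕ} (h : descNum σ ≤ 2 * d + 1) :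
    ∃ σ', descNum σ' ≤ d ∧ DLStep σ' σ := by
  obtain ⟨c, hc⟩ := descNum_le_iff_exists_isRunLabeling.mp h
  obtain ⟨m, hm⟩ := Fin.exists_iff_val_lt_of_antitone (P := fun i => c i ≤ d)
    fun i j hij hj => (hc.monotone hij).trans hj
  -- `q` merges run `j` with run `j + d + 1`; positions `< m` carry the lower runs
  let q : Fin n → ℕ := fun i => if c i ≤ d then c i else c i - (d + 1)
  let key : Fin n → ℕ ×ₗ Fin n := fun i => toLex (q i, σ i)
  have hkey_inj : Function.Injective key := fun i j h =>
    σ.injective (congrArg (fun x => (ofLex x).2) h)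
  let ρ := Tuple.sort key
  have hρ : StrictMono (key ∘ ρ) :=
    (Tuple.monotone_sort key).strictMono_of_injective (hkey_inj.comp ρ.injective)
  have hkey : ∀ i j : Fin n, i < j → (c i ≤ d ↔ c j ≤ d) → key i < key j := by
    intro i j hij hb
    have := hc.monotone hij.le
    refine Prod.Lex.toLex_lt_toLex'.mpr ⟨?_, fun hq => hc.lt_of_eq hij ?_⟩
    · simp only [q]
      split_ifs <;> omega
    · simp only [q] at hq
      split_ifs at hq <;> omega
  refine ⟨σ * ρ, descNum_le_iff_exists_isRunLabeling.mpr ⟨q ∘ ρ, ?_, ?_, ?_⟩, m, ρ⁻¹, ?_, ?_, ?_⟩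
  · exact fun i j hij => Prod.Lex.monotone_fst _ _ (hρ.monotone hij)
  · intro i
    have := hc.le (ρ i)
    simp only [Function.comp_apply, q]
    split_ifs <;> omega
  · exact fun i j hij heq => (Prod.Lex.toLex_lt_toLex'.mp (hρ hij)).2 heq
  · intro i j hi hj hij
    refine hρ.lt_iff_lt.mp ?_
    simpa using hkey i j hij (by rw [hm, hm]; tauto)
  · intro i j hi hj hij
    refine hρ.lt_iff_lt.mp ?_
    simpa using hkey i j hij (by rw [hm, hm]; omega)
  · simp

lemma exists_dlStep_iff_descNum_le {d : ℕ} :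
    (∃ σ', descNum σ' ≤ d ∧ DLStep σ' σ) ↔ descNum σ ≤ 2 * d + 1 :=
  ⟨fun ⟨_, h, hs⟩ => descNum_le_of_dlStep h hs, exists_dlStep_of_descNum_le⟩

lemma dlStep_refl (σ : Perm (Fin n)) : DLStep σ σ :=
  ⟨0, 1, fun _ _ h => absurd h (Nat.not_lt_zero _), fun _ _ _ _ h => h, fun _ => rfl⟩

lemma obtainableIn_zero_iff : ObtainableIn 0 σ ↔ σ = 1 := by
  refine ⟨fun ⟨q, c, hq, h0, hqσ, _⟩ => ?_, fun h => ?_⟩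
  · obtain rfl : q = 0 := Nat.le_zero.mp hq
    rw [← hqσ, h0]
  · exact ⟨0, fun _ => σ, le_rfl, h, rfl, fun _ h => absurd h (Nat.not_lt_zero _)⟩

lemma obtainableIn_succ_iff {p : ℕ} :
    ObtainableIn (p + 1) σ ↔ ∃ σ', ObtainableIn p σ' ∧ DLStep σ' σ := by
  constructor
  · rintro ⟨_ | q, c, hq, h0, hqσ, hs⟩
    · exact ⟨σ, ⟨0, c, p.zero_le, h0, hqσ, hs⟩, dlStep_refl σ⟩
    · exact ⟨c q, ⟨q, c, by omega, h0, rfl, fun i hi => hs i (by omega)⟩,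
        hqσ ▸ hs q q.lt_succ_self⟩
  · rintro ⟨σ', ⟨q, c, hq, h0, hqσ, hs⟩, hstep⟩
    refine ⟨q + 1, Function.update c (q + 1) σ, by omega, ?_, by simp, fun i hi => ?_⟩
    · rwa [Function.update_of_ne (by omega)]
    · rcases Nat.lt_succ_iff_lt_or_eq.mp hi with hi | rfl
      · rw [Function.update_of_ne (by omega), Function.update_of_ne (by omega)]
        exact hs i hi
      · rwa [Function.update_self, Function.update_of_ne (by omega), hqσ]

/-- A permutation is obtainable in at most `p` steps in the whole genome duplication -
random loss model if and only if its number of descents is at most `2 ^ p - 1`. -/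
theorem obtainable_iff_descNum_le {n : ℕ} (p : ℕ) (σ : Equiv.Perm (Fin n)) :
    ObtainableIn p σ ↔ descNum σ ≤ 2 ^ p - 1 := by
  induction p generalizing σ with
  | zero => simp [obtainableIn_zero_iff, descNum_eq_zero_iff]
  | succ p ih =>
    have hpow : 2 ^ (p + 1) - 1 = 2 * (2 ^ p - 1) + 1 := by
      have := p.one_le_two_pow
      rw [pow_succ]
      omega
    simp only [obtainableIn_succ_iff, ih, hpow, exists_dlStep_iff_descNum_le]
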